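/- Assume the Notation 3.2 setup. Let n ≥ 1 be a natural number with binary expansion n = 2^{i_1} + ⋯ + 2^{i_d} where i_1 < i_2 < ⋯ < i_d, and let m be such that 2^m ≤ n < 2^{m+1}. Define R(n) = {a ∈ A(n) : A(2^{m+1}−n)·a ⊆ U(2^{m+1})}. Then V(2^{i_1})V(2^{i_2})⋯V(2^{i_d}) + R(n) = A(n). -/

import Mathlib

open Module

noncomputable section

/-- The free associative algebra `K⟨x,y⟩` on two generators. -/
abbrev FA (K : Type*) [Field K] := FreeAlgebra K (Fin 2)

/-- The element of `K⟨x,y⟩` given by a word (a list of letters). -/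
def wordOf (K : Type*) [Field K] (l : List (Fin 2)) : FA K :=
  (l.map (FreeAlgebra.ι K)).prod

/-- `a` is a word of length `n` over the two generators. -/
def IsWord (K : Type*) [Field K] (n : ℕ) (a : FA K) : Prop :=
  ∃ l : List (Fin 2), l.length = n ∧ a = wordOf K l

/-- `A(n)`: the span of all words of length `n`. -/
def Aspan (K : Type*) [Field K] (n : ℕ) : Submodule K (FA K) :=
  Submodule.span K {a | IsWord K n a}

/-- The set `T = ∪_{i ≥ 1} {f(i)-g(i)-1, …, f(i)-1}`. -/
def Tset (f g : ℕ → ℕ) : Set ℕ :=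
  {n | ∃ i, 1 ≤ i ∧ f i ≤ n + g i + 1 ∧ n + 1 ≤ f i}

/-- The data and conditions of Notation 3.2 (with the subspaces `U(2^n)`, `V(2^n)`
satisfying conditions (1)–(8) of Proposition 3.1). Here `U n` and `V n` denote the
subspaces `U(2^n)` and `V(2^n)` of `A(2^n)`. -/
structure LSYSetup (K : Type*) [Field K] where
  f : ℕ → ℕ
  g : ℕ → ℕ
  W : ℕ → Submodule K (FA K)
  U : ℕ → Submodule K (FA K)
  V : ℕ → Submodule K (FA K)
  /-- `f(i-1) < f(i) - g(i) - 1` for all `i ≥ 1` -/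
  hf : ∀ i, 1 ≤ i → f (i - 1) + g i + 1 < f i
  /-- `W_i ⊆ A(2^{f(i)})` -/
  hW_le : ∀ i, 1 ≤ i → W i ≤ Aspan K (2 ^ f i)
  /-- `dim W_i ≤ 2^{2^{g(i)}} - 2` -/
  hW_dim : ∀ i, 1 ≤ i → finrank K (W i) ≤ 2 ^ 2 ^ g i - 2
  hU_le : ∀ n, U n ≤ Aspan K (2 ^ n)
  hV_le : ∀ n, V n ≤ Aspan K (2 ^ n)
  /-- (1) `U(2^n) ⊕ V(2^n) = A(2^n)` -/
  h_disj : ∀ n, Disjoint (U n) (V n)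
  h_sup : ∀ n, U n ⊔ V n = Aspan K (2 ^ n)
  /-- (2) `dim V(2^n) = 2` whenever `n ∉ T` -/
  h_dimV : ∀ n, n ∉ Tset f g → finrank K (V n) = 2
  /-- (3) `dim V(2^{n+j}) = 2^{2^j}` whenever `n = f(i)-g(i)-1` and `0 ≤ j ≤ g(i)` -/
  h_dimV' : ∀ i j n, 1 ≤ i → n + g i + 1 = f i → j ≤ g i →
      finrank K (V (n + j)) = 2 ^ 2 ^ j
  /-- (4) `V(2^n)` has a basis consisting of words -/
  h_basis : ∀ n, ∃ s : Set (FA K), (∀ w ∈ s, IsWord K (2 ^ n) w) ∧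
      LinearIndependent K ((↑) : s → FA K) ∧ Submodule.span K s = V n
  /-- (5) `W_i ⊆ U(2^{f(i)})` -/
  hWU : ∀ i, 1 ≤ i → W i ≤ U (f i)
  /-- (6) `A(2^n)U(2^n) + U(2^n)A(2^n) ⊆ U(2^{n+1})` -/
  hU_mul : ∀ n, Aspan K (2 ^ n) * U n ⊔ U n * Aspan K (2 ^ n) ≤ U (n + 1)
  /-- (7) `V(2^{n+1}) ⊆ V(2^n)V(2^n)` -/
  hV_mul : ∀ n, V (n + 1) ≤ V n * V n
  /-- (8) if `n ∉ T` then some word `w ∈ V(2^n)` has `w·A(2^n) ⊆ U(2^{n+1})` -/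
  h_word : ∀ n, n ∉ Tset f g → ∃ w, IsWord K (2 ^ n) w ∧ w ∈ V n ∧
      ∀ a ∈ Aspan K (2 ^ n), w * a ∈ U (n + 1)

variable {K : Type*} [Field K]

/-- `R(n) = {a ∈ A(n) : A(2^{m+1}-n)·a ⊆ U(2^{m+1})}`. -/
def Rspace (S : LSYSetup K) (n m : ℕ) : Submodule K (FA K) where
  carrier := {a | a ∈ Aspan K n ∧ ∀ b ∈ Aspan K (2 ^ (m + 1) - n), b * a ∈ S.U (m + 1)}
  add_mem' := by
    rintro a b ⟨ha1, ha2⟩ ⟨hb1, hb2⟩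
    exact ⟨add_mem ha1 hb1, fun c hc => by
      rw [mul_add]; exact add_mem (ha2 c hc) (hb2 c hc)⟩
  zero_mem' := ⟨zero_mem _, fun c hc => by rw [mul_zero]; exact zero_mem _⟩
  smul_mem' := by
    rintro k a ⟨ha1, ha2⟩
    exact ⟨Submodule.smul_mem _ k ha1, fun c hc => by
      rw [mul_smul_comm]; exact Submodule.smul_mem _ _ (ha2 c hc)⟩

/-- `L(n) = {a ∈ A(n) : a·A(2^{m+1}-n) ⊆ U(2^{m+1})}`. -/
def Lspace (S : LSYSetup K) (n m : ℕ) : Submodule K (FA K) where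
  carrier := {a | a ∈ Aspan K n ∧ ∀ b ∈ Aspan K (2 ^ (m + 1) - n), a * b ∈ S.U (m + 1)}
  add_mem' := by
    rintro a b ⟨ha1, ha2⟩ ⟨hb1, hb2⟩
    exact ⟨add_mem ha1 hb1, fun c hc => by
      rw [add_mul]; exact add_mem (ha2 c hc) (hb2 c hc)⟩
  zero_mem' := ⟨zero_mem _, fun c hc => by rw [zero_mul]; exact zero_mem _⟩
  smul_mem' := by
    rintro k a ⟨ha1, ha2⟩
    exact ⟨Submodule.smul_mem _ k ha1, fun c hc => by
      rw [smul_mul_assoc]; exact Submodule.smul_mem _ _ (ha2 c hc)⟩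

/-- `I(n) = {a ∈ A(n) : A(j)·a·A(2^{m+2}-j-n) ⊆ U(2^{m+1})A(2^{m+1}) + A(2^{m+1})U(2^{m+1})`
for all `0 ≤ j ≤ 2^{m+2}-n}`, where `2^m ≤ n < 2^{m+1}` (i.e. `m = Nat.log 2 n`). -/
def Ispace (S : LSYSetup K) (n : ℕ) : Submodule K (FA K) where
  carrier := {a | a ∈ Aspan K n ∧ ∀ j ≤ 2 ^ (Nat.log 2 n + 2) - n,
      ∀ b ∈ Aspan K j, ∀ c ∈ Aspan K (2 ^ (Nat.log 2 n + 2) - j - n),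
      b * a * c ∈ S.U (Nat.log 2 n + 1) * Aspan K (2 ^ (Nat.log 2 n + 1)) ⊔
        Aspan K (2 ^ (Nat.log 2 n + 1)) * S.U (Nat.log 2 n + 1)}
  add_mem' := by
    rintro a b ⟨ha1, ha2⟩ ⟨hb1, hb2⟩
    refine ⟨add_mem ha1 hb1, fun j hj c hc d hd => ?_⟩
    rw [mul_add, add_mul]
    exact add_mem (ha2 j hj c hc d hd) (hb2 j hj c hc d hd)
  zero_mem' := ⟨zero_mem _, fun j hj c hc d hd => by
    rw [mul_zero, zero_mul]; exact zero_mem _⟩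
  smul_mem' := by
    rintro k a ⟨ha1, ha2⟩
    refine ⟨Submodule.smul_mem _ k ha1, fun j hj c hc d hd => ?_⟩
    rw [mul_smul_comm, smul_mul_assoc]
    exact Submodule.smul_mem _ _ (ha2 j hj c hc d hd)


/-!
Peel off the smallest binary digit: `n = 2^i + n'` with `2^i ∣ n'`, so that
`A(n) = A(2^i)·A(n') = (U(2^i) ⊕ V(2^i))·(V(2^{i₂})⋯V(2^{i_d}) + R(n'))` by induction.
The summand `V(2^i)·V(2^{i₂})⋯` is the product we want, `A(2^i)·R(n') ⊆ R(n)` holds because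
`A(2^{m+1}-n)·A(2^i) = A(2^{m+1}-n')`, and `U(2^i)·A(n') ⊆ R(n)` because in
`A(2^{m+1}-n)·U(2^i)·A(n')` the factor `U(2^i)` starts at a multiple of `2^i`: it sits inside
an aligned block of length `2^{i+1}`, so condition (6) absorbs it into `U(2^{i+1})`, and so on
up to `U(2^{m+1})`.
-/

lemma wordOf_append (l l' : List (Fin 2)) :
    wordOf K (l ++ l') = wordOf K l * wordOf K l' := by
  simp [wordOf]

open scoped Pointwise in
lemma setOf_isWord_mul_setOf_isWord (p q : ℕ) :
    {a : FA K | IsWord K p a} * {a | IsWord K q a} = {a | IsWord K (p + q) a} := by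
  ext c
  constructor
  · rintro ⟨_, ⟨l, hl, rfl⟩, _, ⟨l', hl', rfl⟩, rfl⟩
    exact ⟨l ++ l', by simp [hl, hl'], (wordOf_append l l').symm⟩
  · rintro ⟨l, hl, rfl⟩
    refine ⟨_, ⟨l.take p, by simp [hl], rfl⟩, _, ⟨l.drop p, by simp [hl], rfl⟩, ?_⟩
    show wordOf K _ * wordOf K _ = _
    rw [← wordOf_append, List.take_append_drop]

lemma Aspan_mul_Aspan (p q : ℕ) : Aspan K p * Aspan K q = Aspan K (p + q) := by
  rw [Aspan, Aspan, Submodule.span_mul_span, setOf_isWord_mul_setOf_isWord, Aspan]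

lemma Aspan_zero : Aspan K 0 = 1 := by
  rw [Aspan, Submodule.one_eq_span]
  congr 1
  ext a
  simp [IsWord, wordOf, List.length_eq_zero_iff]

namespace LSYSetup

variable (S : LSYSetup K)

lemma prod_map_V_le (L : List ℕ) :
    (L.map S.V).prod ≤ Aspan K (L.map (2 ^ ·)).sum := by
  induction L with
  | nil => simp [Aspan_zero]
  | cons i L ih =>
    rw [List.map_cons, List.prod_cons, List.map_cons, List.sum_cons, ← Aspan_mul_Aspan]
    exact mul_le_mul' (S.hV_le i) ih

/-- Condition (6) iterated: a copy of `U(2^k)` starting at a multiple of `2^k` inside a word of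
length `2^{k+d}` is absorbed into `U(2^{k+d})`. -/
lemma Aspan_mul_U_mul_Aspan_le (d : ℕ) :
    ∀ k a b, a + 1 + b = 2 ^ d →
      Aspan K (2 ^ k * a) * S.U k * Aspan K (2 ^ k * b) ≤ S.U (k + d) := by
  induction d with
  | zero =>
    intro k a b h
    obtain ⟨rfl, rfl⟩ : a = 0 ∧ b = 0 := by simp at h; omega
    simp [Aspan_zero]
  | succ d ih =>
    intro k a b h
    rw [← add_comm 1 d, ← add_assoc]
    obtain ⟨a', rfl | rfl⟩ := Nat.even_or_odd' a <;> obtain ⟨b', rfl | rfl⟩ := Nat.even_or_odd' b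
    · omega
    · -- the block `U(2^k)·A(2^k)` starts at `2^{k+1}·a'`
      calc Aspan K (2 ^ k * (2 * a')) * S.U k * Aspan K (2 ^ k * (2 * b' + 1))
          = Aspan K (2 ^ (k + 1) * a') * (S.U k * Aspan K (2 ^ k)) *
              Aspan K (2 ^ (k + 1) * b') := by
            rw [show 2 ^ k * (2 * a') = 2 ^ (k + 1) * a' by ring,
              show 2 ^ k * (2 * b' + 1) = 2 ^ k + 2 ^ (k + 1) * b' by ring, ← Aspan_mul_Aspan]
            simp only [mul_assoc]
        _ ≤ Aspan K (2 ^ (k + 1) * a') * S.U (k + 1) * Aspan K (2 ^ (k + 1) * b') := by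
            gcongr
            exact le_sup_right.trans (S.hU_mul k)
        _ ≤ S.U (k + 1 + d) := ih (k + 1) a' b' (by rw [pow_succ] at h; omega)
    · -- the block `A(2^k)·U(2^k)` starts at `2^{k+1}·a'`
      calc Aspan K (2 ^ k * (2 * a' + 1)) * S.U k * Aspan K (2 ^ k * (2 * b'))
          = Aspan K (2 ^ (k + 1) * a') * (Aspan K (2 ^ k) * S.U k) *
              Aspan K (2 ^ (k + 1) * b') := by
            rw [show 2 ^ k * (2 * a' + 1) = 2 ^ (k + 1) * a' + 2 ^ k by ring,
              show 2 ^ k * (2 * b') = 2 ^ (k + 1) * b' by ring, ← Aspan_mul_Aspan]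
            simp only [mul_assoc]
        _ ≤ Aspan K (2 ^ (k + 1) * a') * S.U (k + 1) * Aspan K (2 ^ (k + 1) * b') := by
            gcongr
            exact le_sup_left.trans (S.hU_mul k)
        _ ≤ S.U (k + 1 + d) := ih (k + 1) a' b' (by rw [pow_succ] at h; omega)
    · omega

lemma le_Rspace_iff {X : Submodule K (FA K)} {n m : ℕ} :
    X ≤ Rspace S n m ↔ X ≤ Aspan K n ∧ Aspan K (2 ^ (m + 1) - n) * X ≤ S.U (m + 1) := by
  rw [Submodule.mul_le]
  exact ⟨fun h => ⟨fun x hx => (h hx).1, fun b hb x hx => (h hx).2 b hb⟩,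
    fun h x hx => ⟨h.1 hx, fun b hb => h.2 b hb x hx⟩⟩

lemma Rspace_le (n m : ℕ) : Rspace S n m ≤ Aspan K n :=
  (S.le_Rspace_iff.1 le_rfl).1

lemma Aspan_mul_Rspace_le {i n m : ℕ} (h : 2 ^ i + n ≤ 2 ^ (m + 1)) :
    Aspan K (2 ^ i) * Rspace S n m ≤ Rspace S (2 ^ i + n) m := by
  refine S.le_Rspace_iff.2 ⟨?_, ?_⟩
  · rw [← Aspan_mul_Aspan]
    gcongr
    exact S.Rspace_le n m
  · have : 2 ^ (m + 1) - (2 ^ i + n) + 2 ^ i = 2 ^ (m + 1) - n := by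
      generalize 2 ^ i = x at h ⊢
      omega
    rw [← mul_assoc, Aspan_mul_Aspan, this]
    exact (S.le_Rspace_iff.1 le_rfl).2

lemma U_mul_Aspan_le_Rspace {i n m : ℕ} (h : 2 ^ i + n ≤ 2 ^ (m + 1)) (hi : i ≤ m + 1)
    (hn : 2 ^ i ∣ n) : S.U i * Aspan K n ≤ Rspace S (2 ^ i + n) m := by
  obtain ⟨b, rfl⟩ := hn
  obtain ⟨a, ha⟩ : 2 ^ i ∣ 2 ^ (m + 1) - (2 ^ i + 2 ^ i * b) :=
    Nat.dvd_sub (pow_dvd_pow 2 hi) (dvd_add dvd_rfl (dvd_mul_right _ b))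
  have hab : a + 1 + b = 2 ^ (m + 1 - i) := by
    refine Nat.eq_of_mul_eq_mul_left (pow_pos two_pos i) ?_
    rw [← pow_add, Nat.add_sub_cancel' hi, mul_add, mul_add, mul_one, ← ha]
    omega
  refine S.le_Rspace_iff.2 ⟨?_, ?_⟩
  · rw [← Aspan_mul_Aspan]
    gcongr
    exact S.hU_le i
  · rw [← mul_assoc, ha]
    simpa [hi] using S.Aspan_mul_U_mul_Aspan_le (m + 1 - i) i a b hab

theorem prod_map_V_sup_Rspace (L : List ℕ) (hL : L.Pairwise (· ≤ ·)) (m : ℕ)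
    (hLm : (L.map (2 ^ ·)).sum ≤ 2 ^ (m + 1)) :
    (L.map S.V).prod ⊔ Rspace S (L.map (2 ^ ·)).sum m = Aspan K (L.map (2 ^ ·)).sum := by
  induction L with
  | nil =>
    simp only [List.map_nil, List.prod_nil, List.sum_nil, ← Aspan_zero]
    exact sup_eq_left.2 (S.Rspace_le 0 m)
  | cons i L ih =>
    rw [List.pairwise_cons] at hL
    simp only [List.map_cons, List.prod_cons, List.sum_cons] at hLm ⊢
    set n := (L.map (2 ^ ·)).sum
    have hi : i ≤ m + 1 := (Nat.pow_le_pow_iff_right one_lt_two).1 (by omega)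
    have hdvd : 2 ^ i ∣ n := List.dvd_sum <| by
      simpa using fun j hj => pow_dvd_pow 2 (hL.1 j hj)
    refine le_antisymm (sup_le ?_ (S.Rspace_le _ m)) ?_
    · rw [← Aspan_mul_Aspan]
      exact mul_le_mul' (S.hV_le i) (S.prod_map_V_le L)
    · rw [← Aspan_mul_Aspan, ← ih hL.2 (by omega), Submodule.mul_sup]
      refine sup_le ?_ ((S.Aspan_mul_Rspace_le hLm).trans le_sup_right)
      rw [← S.h_sup i, Submodule.sup_mul]
      refine sup_le ?_ le_sup_left
      calc S.U i * (L.map S.V).prod ≤ S.U i * Aspan K n := by gcongr; exact S.prod_map_V_le L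
        _ ≤ _ := (S.U_mul_Aspan_le_Rspace hLm hi hdvd).trans le_sup_right

end LSYSetup

theorem lemma_3_3_R_general (S : LSYSetup K) (n : ℕ)
    (L : List ℕ) (hL : L.Pairwise (· < ·)) (hsum : (L.map (2 ^ ·)).sum = n)
    (m : ℕ) (hm₂ : n < 2 ^ (m + 1)) :
    (L.map S.V).prod ⊔ Rspace S n m = Aspan K n := by
  subst hsum
  exact S.prod_map_V_sup_Rspace L (hL.imp le_of_lt) m hm₂.le

/-- **Lemma 3.3 (first part).** If `n ≥ 1` has binary expansion `2^{i₁} + ⋯ + 2^{i_d}`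
with `i₁ < ⋯ < i_d` and `2^m ≤ n < 2^{m+1}`, then
`V(2^{i₁})V(2^{i₂})⋯V(2^{i_d}) + R(n) = A(n)`. -/
theorem lemma_3_3_R (S : LSYSetup K) (n : ℕ) (hn : 1 ≤ n)
    (L : List ℕ) (hL : L.Pairwise (· < ·)) (hsum : (L.map (2 ^ ·)).sum = n)
    (m : ℕ) (hm₁ : 2 ^ m ≤ n) (hm₂ : n < 2 ^ (m + 1)) :
    (L.map S.V).prod ⊔ Rspace S n m = Aspan K n :=
  lemma_3_3_R_general S n L hL hsum m hm₂

end
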